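/- Let (φ,X,Y) be an instance of Π₂SAT and let I_φ be the IAF constructed from it as in the stated translation. Then (φ,X,Y)∈Π₂SAT if and only if (φ,w)∈SRE⁻(I_φ−{(φ,φ)}, ∅, (pr,true)). -/

import Mathlib

universe u

/-- An abstract argumentation framework: a set of arguments with an attack relation. -/
structure AF (α : Type u) where
  args : Set α
  att : Set (α × α)

namespace AF

variable {α : Type u}

/-- `S⁺_F`: arguments attacked by `S`. -/
def plusSet (F : AF α) (S : Set α) : Set α := {a | a ∈ F.args ∧ ∃ b ∈ S, (b, a) ∈ F.att}

/-- `S⁻_F`: arguments attacking `S`. -/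
def minusSet (F : AF α) (S : Set α) : Set α := {a | a ∈ F.args ∧ ∃ b ∈ S, (a, b) ∈ F.att}

/-- `S` is conflict-free in `F`. -/
def confFree (F : AF α) (S : Set α) : Prop := S ∩ F.plusSet S = ∅

/-- `S` defends `a` in `F`: every attacker of `a` is attacked by `S`. -/
def defends (F : AF α) (S : Set α) (a : α) : Prop := ∀ b, (b, a) ∈ F.att → b ∈ F.plusSet S

/-- The characteristic function `Γ_F(S)`: arguments defended by `S`. -/
def Γ (F : AF α) (S : Set α) : Set α := {a | a ∈ F.args ∧ F.defends S a}

/-- Admissible: conflict-free and self-defending. -/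
def isAd (F : AF α) (S : Set α) : Prop := S ⊆ F.args ∧ F.confFree S ∧ S ⊆ F.Γ S

/-- Stable: conflict-free and attacking exactly the outside. -/
def isSt (F : AF α) (S : Set α) : Prop := S ⊆ F.args ∧ F.confFree S ∧ F.plusSet S = F.args \ S

/-- Complete: admissible and containing all defended arguments. -/
def isCo (F : AF α) (S : Set α) : Prop := F.isAd S ∧ F.Γ S ⊆ S

/-- Grounded: ⊆-minimal complete. -/
def isGr (F : AF α) (S : Set α) : Prop := F.isCo S ∧ ∀ T, F.isCo T → T ⊆ S → T = S

/-- Preferred: ⊆-maximal admissible. -/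
def isPr (F : AF α) (S : Set α) : Prop := F.isAd S ∧ ∀ T, F.isAd T → S ⊆ T → S = T

end AF

/-- The five common semantics. -/
inductive Sem : Type
  | ad | st | co | gr | pr
deriving DecidableEq

/-- `S` is a `σ`-extension of `F`. -/
def extOf {α : Type u} : Sem → AF α → Set α → Prop
  | .ad => AF.isAd
  | .st => AF.isSt
  | .co => AF.isCo
  | .gr => AF.isGr
  | .pr => AF.isPr

/-- An incomplete argumentation framework (data part). -/
structure IAF (α : Type u) where
  A : Set α
  Aq : Set α
  R : Set (α × α)
  Rq : Set (α × α)

namespace IAF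

variable {α : Type u}

/-- Well-formedness: `A`,`A?` disjoint; `R`,`R?` disjoint subsets of `(A∪A?)×(A∪A?)`. -/
def WF (I : IAF α) : Prop :=
  Disjoint I.A I.Aq ∧ Disjoint I.R I.Rq ∧
  I.R ⊆ (I.A ∪ I.Aq) ×ˢ (I.A ∪ I.Aq) ∧
  I.Rq ⊆ (I.A ∪ I.Aq) ×ˢ (I.A ∪ I.Aq)

/-- `cert(I)`: the AF projected on the certain part. -/
def cert (I : IAF α) : AF α := ⟨I.A, I.R ∩ I.A ×ˢ I.A⟩

/-- `I'` is a partial completion of `I`. -/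
def PartOf (I' I : IAF α) : Prop :=
  I'.WF ∧ I.A ⊆ I'.A ∧ I'.A ⊆ I.A ∪ I.Aq ∧
  I.R ∩ (I'.A ∪ I'.Aq) ×ˢ (I'.A ∪ I'.Aq) ⊆ I'.R ∧
  I'.R ⊆ I.R ∪ I.Rq ∧ I'.Aq ⊆ I.Aq ∧ I'.Rq ⊆ I.Rq

/-- `F` is a completion of `I`. -/
def IsCompletion (I : IAF α) (F : AF α) : Prop := ∃ I' : IAF α, I'.PartOf I ∧ F = I'.cert

/-- `I + R₀` for a set of uncertain attacks. -/
def addR (I : IAF α) (R0 : Set (α × α)) : IAF α := ⟨I.A, I.Aq, I.R ∪ R0, I.Rq \ R0⟩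

/-- `I − R₀` for a set of uncertain attacks. -/
def subR (I : IAF α) (R0 : Set (α × α)) : IAF α := ⟨I.A, I.Aq, I.R, I.Rq \ R0⟩

/-- `I + A₀` for a set of uncertain arguments. -/
def addA (I : IAF α) (A0 : Set α) : IAF α := ⟨I.A ∪ A0, I.Aq \ A0, I.R, I.Rq⟩

/-- `I − A₀` for a set of uncertain arguments. -/
def subA (I : IAF α) (A0 : Set α) : IAF α :=
  ⟨I.A, I.Aq \ A0,
   I.R \ {p | p ∈ I.R ∪ I.Rq ∧ (p.1 ∈ A0 ∨ p.2 ∈ A0)},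
   I.Rq \ {p | p ∈ I.R ∪ I.Rq ∧ (p.1 ∈ A0 ∨ p.2 ∈ A0)}⟩

/-- `S⁺_I`. -/
def plusI (I : IAF α) (S : Set α) : Set α := {a | a ∈ I.A ∪ I.Aq ∧ ∃ b ∈ S, (b, a) ∈ I.R}

/-- `S⁻_I`. -/
def minusI (I : IAF α) (S : Set α) : Set α := {a | a ∈ I.A ∪ I.Aq ∧ ∃ b ∈ S, (a, b) ∈ I.R}

/-- `S^∼_I`. -/
def simI (I : IAF α) (S : Set α) : Set α :=
  {a | a ∈ I.A ∪ I.Aq ∧ ∀ b ∈ S, (b, a) ∉ I.R ∪ I.Rq}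

end IAF

/-- An element of an IAF: either an argument or an attack. -/
inductive Elem (α : Type u) : Type u
  | arg (a : α)
  | att (r : α × α)

/-- `e` is an uncertain element of `I`, i.e. `e ∈ A? ∪ R?`. -/
def IAF.isUnc {α : Type u} (I : IAF α) : Elem α → Prop
  | .arg a => a ∈ I.Aq
  | .att r => r ∈ I.Rq

/-- `I + {e}`. -/
def IAF.addE {α : Type u} (I : IAF α) : Elem α → IAF α
  | .arg a => I.addA {a}
  | .att r => I.addR {r}

/-- `I − {e}`. -/
def IAF.subE {α : Type u} (I : IAF α) : Elem α → IAF α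
  | .arg a => I.subA {a}
  | .att r => I.subR {r}

/-- `e` is the unique uncertain element of `I`, i.e. `A? ∪ R? = {e}`. -/
def onlyUnc {α : Type u} (I : IAF α) : Elem α → Prop
  | .arg a => I.Aq = {a} ∧ I.Rq = ∅
  | .att r => I.Aq = ∅ ∧ I.Rq = {r}

/-- A verification status: a semantics together with true/false. -/
abbrev VStatus := Sem × Bool

/-- `S` has verification status `j` in the AF `F`. -/
def hasStatus {α : Type u} (F : AF α) (S : Set α) (j : VStatus) : Prop :=
  cond j.2 (extOf j.1 F S) (¬ extOf j.1 F S)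

/-- `S` is stable-`j` w.r.t. `I`. -/
def IAF.stableJ {α : Type u} (I : IAF α) (S : Set α) (j : VStatus) : Prop :=
  ∀ F, I.IsCompletion F → hasStatus F S j

/-- `S` is stable-`σ` w.r.t. `I`. -/
def IAF.stableSem {α : Type u} (I : IAF α) (S : Set α) (σ : Sem) : Prop :=
  I.stableJ S (σ, true) ∨ I.stableJ S (σ, false)

/-- `RE⁺(I,S,j)`: uncertain elements whose addition is `j`-relevant for `S` w.r.t. `I`. -/
def REplus {α : Type u} (I : IAF α) (S : Set α) (j : VStatus) : Set (Elem α) :=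
  {e | I.isUnc e ∧ ∃ I' : IAF α, I'.PartOf I ∧ onlyUnc I' e ∧
    hasStatus (I'.addE e).cert S j ∧ ¬ hasStatus (I'.subE e).cert S j}

/-- `RE⁻(I,S,j)`: uncertain elements whose removal is `j`-relevant for `S` w.r.t. `I`. -/
def REminus {α : Type u} (I : IAF α) (S : Set α) (j : VStatus) : Set (Elem α) :=
  {e | I.isUnc e ∧ ∃ I' : IAF α, I'.PartOf I ∧ onlyUnc I' e ∧
    hasStatus (I'.subE e).cert S j ∧ ¬ hasStatus (I'.addE e).cert S j}

/-- `e` is `σ`-irrelevant for `S` w.r.t. `I`. -/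
def irrelevant {α : Type u} (I : IAF α) (S : Set α) (σ : Sem) (e : Elem α) : Prop :=
  e ∉ REplus I S (σ, true) ∧ e ∉ REminus I S (σ, true) ∧
  e ∉ REplus I S (σ, false) ∧ e ∉ REminus I S (σ, false)

/-- `PosVer_σ(I,S) = true`. -/
def PosVer {α : Type u} (σ : Sem) (I : IAF α) (S : Set α) : Prop :=
  ∃ F, I.IsCompletion F ∧ extOf σ F S

/-- `NecVer_σ(I,S) = true`. -/
def NecVer {α : Type u} (σ : Sem) (I : IAF α) (S : Set α) : Prop :=
  ∀ F, I.IsCompletion F → extOf σ F S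

/-- `SRE⁺(I,S,j)`: uncertain elements whose addition is strongly `j`-relevant. -/
def SREplus {α : Type u} (I : IAF α) (S : Set α) (j : VStatus) : Set (Elem α) :=
  {e | I.isUnc e ∧ ∀ I' : IAF α, I'.PartOf (I.subE e) → ¬ I'.stableJ S j}

/-- `SRE⁻(I,S,j)`: uncertain elements whose removal is strongly `j`-relevant. -/
def SREminus {α : Type u} (I : IAF α) (S : Set α) (j : VStatus) : Set (Elem α) :=
  {e | I.isUnc e ∧ ∀ I' : IAF α, I'.PartOf (I.addE e) → ¬ I'.stableJ S j}

/-- The `OutRel(I,S,(a,b))` predicate. -/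
def OutRel {α : Type u} (I : IAF α) (S : Set α) (r : α × α) : Prop :=
  (I.minusI {r.2} \ {r.1}) ∩ I.simI S = ∅ ∧
  PosVer Sem.co
    ((I.addR {p | p ∈ I.Rq ∧ p.1 ∈ S ∧ p.2 ∈ I.minusI {r.2} \ {r.1}}).subR
      {p | p ∈ I.Rq ∧ p.1 ≠ r.1 ∧ p.2 = r.2}) S


/-- Arguments of the IAF built from a `Π₂SAT` instance: literal arguments `pos v`/`neg v`,
clause arguments, the formula argument `phi`, and the auxiliary argument `w`. -/
inductive PArg (V C : Type u) : Type u
  | pos (v : V)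
  | neg (v : V)
  | cl (c : C)
  | phi
  | w

/-- The IAF `I_φ` constructed from a `Π₂SAT` instance `(φ,X,Y)`, where clauses are indexed
by `C` and `clauses c` is the set of literals (a literal is a variable with a sign) of
clause `c`. -/
def IAFofSAT {V C : Type u} (X Y : Set V) (clauses : C → Set (V × Bool)) :
    IAF (PArg V C) :=
  ⟨{a | (∃ v ∈ X, a = PArg.neg v) ∨ (∃ v ∈ Y, a = PArg.pos v ∨ a = PArg.neg v) ∨
        (∃ c : C, a = PArg.cl c) ∨ a = PArg.phi ∨ a = PArg.w},
   {a | ∃ v ∈ X, a = PArg.pos v},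
   {p | (∃ v ∈ X, p = (PArg.pos v, PArg.neg v)) ∨
        (∃ v ∈ Y, p = (PArg.pos v, PArg.neg v) ∨ p = (PArg.neg v, PArg.pos v)) ∨
        (∃ c : C, ∃ l ∈ clauses c,
          p = ((if l.2 then PArg.pos l.1 else PArg.neg l.1), PArg.cl c)) ∨
        (∃ c : C, p = (PArg.cl c, PArg.phi) ∨ p = (PArg.cl c, PArg.cl c)) ∨
        (∃ v ∈ X ∪ Y, p = (PArg.w, PArg.pos v) ∨ p = (PArg.w, PArg.neg v)) ∨
        p = (PArg.w, PArg.w)},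
   {(PArg.phi, PArg.phi), (PArg.phi, PArg.w)}⟩

/-- `(φ,X,Y) ∈ Π₂SAT`: for every assignment of `X` there is an extension to all variables
satisfying every clause. -/
def Pi2SAT {V C : Type u} (X : Set V) (clauses : C → Set (V × Bool)) : Prop :=
  ∀ τX : V → Bool, ∃ τ : V → Bool, (∀ v ∈ X, τ v = τX v) ∧
    ∀ c : C, ∃ l ∈ clauses c, τ l.1 = l.2

/-!
Once `(φ,w)` is made certain, only the arguments `xᵥ` remain uncertain, so the completions of
`I_φ − {(φ,φ)} + {(φ,w)}` are the AFs `completionAF τX`, one for each assignment `τX` of `X`, and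
strong relevance of removing `(φ,w)` says that each of them has a nonempty admissible set, i.e.
`∅` is never preferred. A nonempty admissible set contains `φ`, the only attacker of the
self-attacking `w` other than `w`; to defend `φ` it contains, for each clause, a literal attacking
that clause, and these literals form an assignment that extends `τX` and satisfies `φ`.
Conversely, `φ` together with the literals true under a satisfying extension of `τX` is
admissible.
-/

namespace AF

variable {α : Type u} {F : AF α} {S : Set α} {a b : α}

theorem isAd_empty (F : AF α) : F.isAd ∅ :=
  ⟨Set.empty_subset _, Set.empty_inter _, Set.empty_subset _⟩

theorem not_isPr_empty_iff : ¬ F.isPr ∅ ↔ ∃ T, F.isAd T ∧ T.Nonempty := by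
  simp only [isPr, F.isAd_empty, Set.empty_subset, true_and, forall_const, not_forall,
    exists_prop, Set.nonempty_iff_ne_empty, ne_comm]

theorem isAd.not_attacks (hS : F.isAd S) (ha : a ∈ S) (hb : b ∈ S) : (b, a) ∉ F.att :=
  fun hba => Set.eq_empty_iff_forall_notMem.mp hS.2.1 a ⟨ha, hS.1 ha, b, hb, hba⟩

theorem isAd.notMem_of_attacks_self (hS : F.isAd S) (haa : (a, a) ∈ F.att) : a ∉ S :=
  fun ha => hS.not_attacks ha ha haa

theorem isAd.exists_counterattack (hS : F.isAd S) (ha : a ∈ S) (hba : (b, a) ∈ F.att) :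
    ∃ d ∈ S, (d, b) ∈ F.att :=
  ((hS.2.2 ha).2 b hba).2

end AF

namespace IAF

variable {α : Type u} {I J K : IAF α} {F : AF α}

theorem PartOf.trans (hIJ : I.PartOf J) (hJK : J.PartOf K) : I.PartOf K := by
  obtain ⟨hwf, hA, hA', hR, hR', hAq, hRq⟩ := hIJ
  obtain ⟨-, hA₁, hA₁', hR₁, hR₁', hAq₁, hRq₁⟩ := hJK
  have hdom : I.A ∪ I.Aq ⊆ J.A ∪ J.Aq := Set.union_subset hA' (hAq.trans Set.subset_union_right)
  refine ⟨hwf, hA₁.trans hA, fun x hx => ?_,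
    fun p ⟨hp, h₁, h₂⟩ => hR ⟨hR₁ ⟨hp, hdom h₁, hdom h₂⟩, h₁, h₂⟩,
    fun p hp => ?_, hAq.trans hAq₁, hRq.trans hRq₁⟩
  · rcases hA' hx with h | h
    exacts [hA₁' h, Or.inr (hAq₁ h)]
  · rcases hR' hp with h | h
    exacts [hR₁' h, Or.inr (hRq₁ h)]

theorem PartOf.isCompletion (h : I.PartOf J) (hF : I.IsCompletion F) : J.IsCompletion F :=
  let ⟨K, hK, hF⟩ := hF
  ⟨K, hK.trans h, hF⟩

def certainPart (I : IAF α) : IAF α := ⟨I.A, ∅, I.R ∩ I.A ×ˢ I.A, ∅⟩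

theorem certainPart_partOf (I : IAF α) : I.certainPart.PartOf I := by
  refine ⟨⟨Set.disjoint_empty _, Set.disjoint_empty _, ?_, Set.empty_subset _⟩,
    subset_rfl, Set.subset_union_left, ?_, fun p hp => Or.inl hp.1,
    Set.empty_subset _, Set.empty_subset _⟩ <;> simp [certainPart, Set.inter_subset_right]

theorem isCompletion_cert (I : IAF α) : I.IsCompletion I.cert :=
  ⟨I.certainPart, I.certainPart_partOf, by simp [cert, certainPart, Set.inter_assoc]⟩

theorem cert_eq_of_partOf (hJ : J.Rq = ∅) (h : I.PartOf J) :
    I.cert = ⟨I.A, J.R ∩ I.A ×ˢ I.A⟩ := by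
  have hR : I.R ⊆ J.R := fun p hp => (h.2.2.2.2.1 hp).resolve_right (by simp [hJ])
  refine congrArg _ (Set.Subset.antisymm (Set.inter_subset_inter_left _ hR) ?_)
  rintro p ⟨hp, h₁, h₂⟩
  exact ⟨h.2.2.2.1 ⟨hp, Or.inl h₁, Or.inl h₂⟩, h₁, h₂⟩

theorem eq_cert_of_isCompletion_certainPart (hF : I.certainPart.IsCompletion F) : F = I.cert := by
  obtain ⟨K, hK, rfl⟩ := hF
  have hA : K.A = I.A := (Set.union_empty _ ▸ hK.2.2.1).antisymm hK.2.1
  rw [cert_eq_of_partOf rfl hK, hA]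
  simp [cert, certainPart, Set.inter_assoc]

theorem forall_partOf_not_stableJ_iff {S : Set α} {j : VStatus} :
    (∀ I : IAF α, I.PartOf J → ¬ I.stableJ S j) ↔ ∀ F, J.IsCompletion F → ¬ hasStatus F S j := by
  constructor
  · rintro h F ⟨K, hK, rfl⟩ hF
    exact h _ (K.certainPart_partOf.trans hK) fun F' hF' =>
      eq_cert_of_isCompletion_certainPart hF' ▸ hF
  · intro h I hI hI'
    exact h _ (hI.isCompletion I.isCompletion_cert) (hI' _ I.isCompletion_cert)

theorem isCompletion_iff_of_Rq_eq_empty (hJ : J.Rq = ∅) :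
    J.IsCompletion F ↔ ∃ A', J.A ⊆ A' ∧ A' ⊆ J.A ∪ J.Aq ∧ F = ⟨A', J.R ∩ A' ×ˢ A'⟩ := by
  constructor
  · rintro ⟨K, hK, rfl⟩
    exact ⟨K.A, hK.2.1, hK.2.2.1, cert_eq_of_partOf hJ hK⟩
  · rintro ⟨A', h₁, h₂, rfl⟩
    refine ⟨⟨A', ∅, J.R ∩ A' ×ˢ A', ∅⟩, ⟨⟨Set.disjoint_empty _, Set.disjoint_empty _, ?_,
      Set.empty_subset _⟩, h₁, h₂, ?_, fun p hp => Or.inl hp.1, Set.empty_subset _,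
      Set.empty_subset _⟩, ?_⟩ <;> simp [cert, Set.inter_assoc]

end IAF

theorem mem_SREminus_iff {α : Type u} {I : IAF α} {S : Set α} {j : VStatus} {e : Elem α} :
    e ∈ SREminus I S j ↔ I.isUnc e ∧ ∀ F, (I.addE e).IsCompletion F → ¬ hasStatus F S j :=
  and_congr_right' IAF.forall_partOf_not_stableJ_iff

namespace PArg

variable {V C : Type u}

/-- The argument of a literal: `xᵥ`/`yᵥ` for a positive one, `x̄ᵥ`/`ȳᵥ` for a negative one. -/
def lit (l : V × Bool) : PArg V C := if l.2 then pos l.1 else neg l.1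

@[simp] theorem lit_true (v : V) : (lit (v, true) : PArg V C) = pos v := rfl

@[simp] theorem lit_false (v : V) : (lit (v, false) : PArg V C) = neg v := rfl

@[simp] theorem lit_inj {l l' : V × Bool} : (lit l : PArg V C) = lit l' ↔ l = l' := by
  obtain ⟨v, _ | _⟩ := l <;> obtain ⟨v', _ | _⟩ := l' <;> simp

@[simp] theorem lit_ne_cl (l : V × Bool) (c : C) : lit l ≠ cl c := by
  obtain ⟨v, _ | _⟩ := l <;> simp

@[simp] theorem lit_ne_phi (l : V × Bool) : (lit l : PArg V C) ≠ phi := by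
  obtain ⟨v, _ | _⟩ := l <;> simp

@[simp] theorem lit_ne_w (l : V × Bool) : (lit l : PArg V C) ≠ w := by
  obtain ⟨v, _ | _⟩ := l <;> simp

@[simp] theorem cl_ne_lit (c : C) (l : V × Bool) : cl c ≠ lit l := (lit_ne_cl l c).symm

@[simp] theorem phi_ne_lit (l : V × Bool) : (phi : PArg V C) ≠ lit l := (lit_ne_phi l).symm

@[simp] theorem w_ne_lit (l : V × Bool) : (w : PArg V C) ≠ lit l := (lit_ne_w l).symm

theorem eq_lit_or (a : PArg V C) : (∃ l, a = lit l) ∨ (∃ c, a = cl c) ∨ a = phi ∨ a = w := by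
  cases a with
  | pos v => exact Or.inl ⟨(v, true), rfl⟩
  | neg v => exact Or.inl ⟨(v, false), rfl⟩
  | cl c => exact Or.inr (Or.inl ⟨c, rfl⟩)
  | phi => simp
  | w => simp

end PArg

open PArg

section Reduction

variable {V C : Type u} (X Y : Set V) (clauses : C → Set (V × Bool))

/-- The attacks of `I_φ − {(φ,φ)} + {(φ,w)}`; none of them is uncertain any more. -/
def completionAtt : Set (PArg V C × PArg V C) := (IAFofSAT X Y clauses).R ∪ {(phi, w)}

/-- The arguments of the completion in which exactly the `xᵥ` with `τX v` are present. -/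
def completionArgs (τX : V → Bool) : Set (PArg V C) :=
  (IAFofSAT X Y clauses).A ∪ pos '' {v | v ∈ X ∧ τX v = true}

def completionAF (τX : V → Bool) : AF (PArg V C) :=
  ⟨completionArgs X Y clauses τX,
    completionAtt X Y clauses ∩ completionArgs X Y clauses τX ×ˢ completionArgs X Y clauses τX⟩

variable {X Y clauses} {τX : V → Bool} {a b : PArg V C}

theorem mem_completionAtt_phi_iff : (b, phi) ∈ completionAtt X Y clauses ↔ ∃ c, b = cl c := by
  simp [completionAtt, IAFofSAT]

theorem mem_completionAtt_w_iff : (b, w) ∈ completionAtt X Y clauses ↔ b = w ∨ b = phi := by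
  simp [completionAtt, IAFofSAT, Or.comm (a := b = phi)]

theorem mem_completionAtt_cl_iff {c : C} :
    (b, cl c) ∈ completionAtt X Y clauses ↔ b = cl c ∨ ∃ l ∈ clauses c, b = lit l := by
  simp only [completionAtt, IAFofSAT, Set.mem_union, Set.mem_singleton_iff, Set.mem_ofPred_eq,
    Prod.ext_iff]
  aesop

theorem mem_completionAtt_lit_iff {v : V} {β : Bool} :
    (b, lit (v, β)) ∈ completionAtt X Y clauses ↔
      v ∈ X ∪ Y ∧ (b = w ∨ b = lit (v, !β) ∧ (β = true → v ∈ Y)) := by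
  simp only [completionAtt, IAFofSAT, Set.mem_union, Set.mem_singleton_iff, Set.mem_ofPred_eq,
    Prod.ext_iff]
  cases β <;> aesop

@[simp] theorem cl_mem_completionArgs (c : C) : cl c ∈ completionArgs X Y clauses τX := by
  simp [completionArgs, IAFofSAT]

@[simp] theorem phi_mem_completionArgs : phi ∈ completionArgs X Y clauses τX := by
  simp [completionArgs, IAFofSAT]

@[simp] theorem w_mem_completionArgs : w ∈ completionArgs X Y clauses τX := by
  simp [completionArgs, IAFofSAT]

theorem lit_mem_completionArgs_iff {v : V} {β : Bool} :
    lit (v, β) ∈ completionArgs X Y clauses τX ↔ v ∈ Y ∨ v ∈ X ∧ (β = true → τX v = true) := by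
  cases β <;> simp [completionArgs, IAFofSAT, Or.comm (a := v ∈ X)]

def satSet (X Y : Set V) (τ : V → Bool) : Set (PArg V C) :=
  {a | a = phi ∨ ∃ v ∈ X ∪ Y, a = lit (v, τ v)}

@[simp] theorem lit_mem_satSet_iff {τ : V → Bool} {v : V} {β : Bool} :
    (lit (v, β) : PArg V C) ∈ satSet X Y τ ↔ v ∈ X ∪ Y ∧ τ v = β := by
  simp [satSet, eq_comm]

theorem isAd_satSet (hlit : ∀ c, ∀ l ∈ clauses c, l.1 ∈ X ∪ Y) {τ : V → Bool}
    (hτ : ∀ v ∈ X, τ v = τX v) (hsat : ∀ c, ∃ l ∈ clauses c, τ l.1 = l.2) :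
    (completionAF X Y clauses τX).isAd (satSet X Y τ) := by
  have hargs : satSet X Y τ ⊆ completionArgs X Y clauses τX := by
    rintro _ (rfl | ⟨v, hv | hv, rfl⟩)
    · exact phi_mem_completionArgs
    · exact lit_mem_completionArgs_iff.mpr (Or.inr ⟨hv, fun h => hτ v hv ▸ h⟩)
    · exact lit_mem_completionArgs_iff.mpr (Or.inl hv)
  refine ⟨hargs, Set.eq_empty_iff_forall_notMem.mpr ?_, fun a ha => ⟨hargs ha, ?_⟩⟩
  · rintro _ ⟨rfl | ⟨v, hv, rfl⟩, -, b, hb, hba, -⟩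
    · obtain ⟨c, rfl⟩ := mem_completionAtt_phi_iff.mp hba
      simp [satSet] at hb
    · rcases (mem_completionAtt_lit_iff.mp hba).2 with rfl | ⟨rfl, -⟩
      · simp [satSet] at hb
      · simp at hb
  · rintro b ⟨hba, hb, -⟩
    refine ⟨hb, ?_⟩
    rcases ha with rfl | ⟨v, hv, rfl⟩
    · obtain ⟨c, rfl⟩ := mem_completionAtt_phi_iff.mp hba
      obtain ⟨l, hl, hτl⟩ := hsat c
      have hlS : (lit l : PArg V C) ∈ satSet X Y τ := lit_mem_satSet_iff.mpr ⟨hlit c l hl, hτl⟩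
      exact ⟨lit l, hlS, mem_completionAtt_cl_iff.mpr (Or.inr ⟨l, hl, rfl⟩), hargs hlS, hb⟩
    · rcases (mem_completionAtt_lit_iff.mp hba).2 with rfl | ⟨rfl, -⟩
      · exact ⟨phi, Or.inl rfl, Or.inr rfl, phi_mem_completionArgs, hb⟩
      · have hlS : (lit (v, τ v) : PArg V C) ∈ satSet X Y τ := lit_mem_satSet_iff.mpr ⟨hv, rfl⟩
        refine ⟨_, hlS, mem_completionAtt_lit_iff.mpr ⟨hv, Or.inr ⟨by simp, fun h => ?_⟩⟩,
          hargs hlS, hb⟩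
        -- here `τ v = false`, so the attacker `pos v` can only be present for `v ∈ Y`
        rcases lit_mem_completionArgs_iff.mp hb with hY | ⟨hX, hτX⟩
        · exact hY
        · simp [hτ v hX, hτX h] at h

variable {T : Set (PArg V C)}

theorem w_notMem_of_isAd (hT : (completionAF X Y clauses τX).isAd T) : w ∉ T :=
  hT.notMem_of_attacks_self
    ⟨mem_completionAtt_w_iff.mpr (Or.inl rfl), w_mem_completionArgs, w_mem_completionArgs⟩

theorem cl_notMem_of_isAd (hT : (completionAF X Y clauses τX).isAd T) (c : C) : cl c ∉ T :=
  hT.notMem_of_attacks_self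
    ⟨mem_completionAtt_cl_iff.mpr (Or.inl rfl), cl_mem_completionArgs c, cl_mem_completionArgs c⟩

theorem phi_mem_of_isAd (hT : (completionAF X Y clauses τX).isAd T) (hne : T.Nonempty) :
    phi ∈ T := by
  obtain ⟨a, ha⟩ := hne
  rcases eq_lit_or a with ⟨⟨v, β⟩, rfl⟩ | ⟨c, rfl⟩ | rfl | rfl
  · have hv : v ∈ X ∪ Y := by
      rcases lit_mem_completionArgs_iff.mp (hT.1 ha) with h | ⟨h, -⟩
      exacts [Or.inr h, Or.inl h]
    obtain ⟨d, hd, hdw, -⟩ := hT.exists_counterattack ha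
      ⟨mem_completionAtt_lit_iff.mpr ⟨hv, Or.inl rfl⟩, w_mem_completionArgs, hT.1 ha⟩
    rcases mem_completionAtt_w_iff.mp hdw with rfl | rfl
    exacts [absurd hd (w_notMem_of_isAd hT), hd]
  · exact absurd ha (cl_notMem_of_isAd hT c)
  · exact ha
  · exact absurd ha (w_notMem_of_isAd hT)

theorem exists_lit_mem_of_isAd (hT : (completionAF X Y clauses τX).isAd T) (hφ : phi ∈ T) (c : C) :
    ∃ l ∈ clauses c, lit l ∈ T := by
  obtain ⟨d, hd, hdc, -⟩ := hT.exists_counterattack hφ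
    ⟨mem_completionAtt_phi_iff.mpr ⟨c, rfl⟩, cl_mem_completionArgs c, phi_mem_completionArgs⟩
  rcases mem_completionAtt_cl_iff.mp hdc with rfl | ⟨l, hl, rfl⟩
  exacts [absurd hd (cl_notMem_of_isAd hT c), ⟨l, hl, hd⟩]

/-- `pos v` attacks `neg v`, and apart from the self-attacking `w` only `neg v` itself, for `v ∈ Y`,
attacks `pos v`. -/
theorem mem_Y_and_pos_notMem_of_neg_mem (hT : (completionAF X Y clauses τX).isAd T) {v : V}
    (hneg : neg v ∈ T) (hpos : pos v ∈ completionArgs X Y clauses τX) : v ∈ Y ∧ pos v ∉ T := by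
  have hv : v ∈ X ∪ Y := by
    rcases (lit_mem_completionArgs_iff (β := false)).mp (hT.1 hneg) with h | ⟨h, -⟩
    exacts [Or.inr h, Or.inl h]
  have hatt : (pos v, neg v) ∈ (completionAF X Y clauses τX).att :=
    ⟨(mem_completionAtt_lit_iff (β := false)).mpr ⟨hv, Or.inr ⟨rfl, by simp⟩⟩, hpos, hT.1 hneg⟩
  obtain ⟨d, hd, hdp, -⟩ := hT.exists_counterattack hneg hatt
  rcases (mem_completionAtt_lit_iff (β := true)).mp hdp |>.2 with rfl | ⟨-, hY⟩
  · exact absurd hd (w_notMem_of_isAd hT)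
  · exact ⟨hY rfl, fun h => hT.not_attacks hneg h hatt⟩

theorem exists_sat_of_isAd (hXY : Disjoint X Y) (hT : (completionAF X Y clauses τX).isAd T)
    (hne : T.Nonempty) :
    ∃ τ : V → Bool, (∀ v ∈ X, τ v = τX v) ∧ ∀ c, ∃ l ∈ clauses c, τ l.1 = l.2 := by
  classical
  refine ⟨fun v => if v ∈ X then τX v else decide (pos v ∈ T), fun v hv => if_pos hv, fun c => ?_⟩
  obtain ⟨⟨v, β⟩, hl, hlT⟩ := exists_lit_mem_of_isAd hT (phi_mem_of_isAd hT hne) c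
  refine ⟨(v, β), hl, ?_⟩
  by_cases hv : v ∈ X <;> cases β <;> simp only [hv, if_true, if_false]
  · by_contra h
    have hpos : pos v ∈ completionArgs X Y clauses τX :=
      (lit_mem_completionArgs_iff (β := true)).mpr (Or.inr ⟨hv, fun _ => by simpa using h⟩)
    exact Set.disjoint_left.mp hXY hv (mem_Y_and_pos_notMem_of_neg_mem hT hlT hpos).1
  · rcases lit_mem_completionArgs_iff.mp (hT.1 hlT) with hY | ⟨-, h⟩
    exacts [absurd hY (Set.disjoint_left.mp hXY hv), h rfl]
  · exact decide_eq_false fun h => (mem_Y_and_pos_notMem_of_neg_mem hT hlT (hT.1 h)).2 h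
  · exact decide_eq_true hlT

theorem exists_nonempty_isAd_completionAF_iff (hXY : Disjoint X Y)
    (hlit : ∀ c, ∀ l ∈ clauses c, l.1 ∈ X ∪ Y) :
    (∃ T, (completionAF X Y clauses τX).isAd T ∧ T.Nonempty) ↔
      ∃ τ : V → Bool, (∀ v ∈ X, τ v = τX v) ∧ ∀ c, ∃ l ∈ clauses c, τ l.1 = l.2 := by
  constructor
  · rintro ⟨T, hT, hne⟩
    exact exists_sat_of_isAd hXY hT hne
  · rintro ⟨τ, hτ, hsat⟩
    exact ⟨_, isAd_satSet hlit hτ hsat, phi, Or.inl rfl⟩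

theorem isCompletion_iff_exists_completionAF_eq {F : AF (PArg V C)} :
    (((IAFofSAT X Y clauses).subR {(phi, phi)}).addE (.att (phi, w))).IsCompletion F ↔
      ∃ τX, completionAF X Y clauses τX = F := by
  rw [IAF.isCompletion_iff_of_Rq_eq_empty (by ext; simp [IAF.addE, IAF.addR, IAF.subR, IAFofSAT])]
  constructor
  · rintro ⟨A', h₁, h₂, rfl⟩
    classical
    have hA : completionArgs X Y clauses (fun v => decide (pos v ∈ A')) = A' := by
      ext a
      simp only [completionArgs, Set.mem_union, Set.mem_image, Set.mem_ofPred_eq, decide_eq_true_eq]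
      constructor
      · rintro (h | ⟨v, ⟨-, h⟩, rfl⟩)
        exacts [h₁ h, h]
      · intro ha
        rcases h₂ ha with h | ⟨v, hv, rfl⟩
        exacts [Or.inl h, Or.inr ⟨v, ⟨hv, ha⟩, rfl⟩]
    exact ⟨_, by rw [completionAF, hA]; rfl⟩
  · rintro ⟨τX, rfl⟩
    refine ⟨completionArgs X Y clauses τX, Set.subset_union_left,
      Set.union_subset_union_right _ ?_, rfl⟩
    rintro _ ⟨v, ⟨hv, -⟩, rfl⟩
    exact ⟨v, hv, rfl⟩

end Reduction

theorem stmt17_general {V C : Type u} (X Y : Set V)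
    (clauses : C → Set (V × Bool))
    (hXY : Disjoint X Y)
    (hlit : ∀ c : C, ∀ l ∈ clauses c, l.1 ∈ X ∪ Y) :
    Pi2SAT X clauses ↔
      Elem.att (PArg.phi, PArg.w) ∈
        SREminus ((IAFofSAT X Y clauses).subR {(PArg.phi, PArg.phi)}) ∅
          (Sem.pr, true) := by
  have hunc : ((IAFofSAT X Y clauses).subR {(phi, phi)}).isUnc (.att (phi, w)) := by
    simp [IAF.isUnc, IAF.subR, IAFofSAT]
  simp only [mem_SREminus_iff, hunc, true_and, isCompletion_iff_exists_completionAF_eq,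
    forall_exists_index, forall_apply_eq_imp_iff]
  exact forall_congr' fun τX =>
    (exists_nonempty_isAd_completionAF_iff hXY hlit).symm.trans AF.not_isPr_empty_iff.symm

/-- `(φ,X,Y) ∈ Π₂SAT` iff removal of `(φ,w)` is strongly `(pr,true)`-relevant
for `∅` w.r.t. `I_φ − {(φ,φ)}`. -/
theorem stmt17 {V C : Type u} [Finite C] (X Y : Set V)
    (clauses : C → Set (V × Bool))
    (hXY : Disjoint X Y) (hXfin : X.Finite) (hYfin : Y.Finite)
    (hlit : ∀ c : C, ∀ l ∈ clauses c, l.1 ∈ X ∪ Y) :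
    Pi2SAT X clauses ↔
      Elem.att (PArg.phi, PArg.w) ∈
        SREminus ((IAFofSAT X Y clauses).subR {(PArg.phi, PArg.phi)}) ∅
          (Sem.pr, true) :=
  stmt17_general X Y clauses hXY hlit
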